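/- Let L/F be a finite separable extension with no intermediate subfields, S a subspace with κ_2(S) = dim(S) − 1, and A a 2-atom of S with n = dim(A) > 2. Then dim_F(L) ≡ 2 (mod n − 1). -/

import Mathlib

open Module Submodule

variable {F L : Type*} [Field F] [Field L] [Algebra F L]

/-- The boundary `∂_S X = dim(XS) - dim(X)` (as an integer). -/
noncomputable def deltaS (S X : Submodule F L) : ℤ :=
  (finrank F ↥(X * S) : ℤ) - finrank F ↥X

/-- Membership in the family `𝒳_k`: `k ≤ dim X < ∞` and `dim(XS) + k ≤ dim L`. -/
def InXk (k : ℕ) (S X : Submodule F L) : Prop :=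
  FiniteDimensional F ↥X ∧ k ≤ finrank F ↥X ∧
    ((finrank F ↥(X * S) + k : ℕ) : Cardinal) ≤ Module.rank F L

/-- A `k`-fragment of `S`: an element of `𝒳_k` attaining the minimum `κ_k(S)` of `∂_S`. -/
def IsFragment (k : ℕ) (S X : Submodule F L) : Prop :=
  InXk k S X ∧ ∀ Y : Submodule F L, InXk k S Y → deltaS S X ≤ deltaS S Y

/-- A `k`-atom of `S`: a `k`-fragment of minimum dimension. -/
def IsAtomk (k : ℕ) (S A : Submodule F L) : Prop :=
  IsFragment k S A ∧ ∀ B : Submodule F L, IsFragment k S B → finrank F ↥A ≤ finrank F ↥B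

/-!
Translate the atom `A` so that `1 ∈ A`. Since `κ₂(S) = dim S - 1`, the subspace `S` is
admissible for `A` with `∂_A S = n - 1`, so `A` has a 2-atom `B ∋ 1`. A subspace stable under
multiplication by some `x ∉ F` is an `F(x) = L`-subspace, hence `0` or `L`; with the
submodularity of `∂` this gives the intersection property `dim (B ∩ xB) ≤ 1` of atoms, whence
`dim (XB) ≥ 2 dim B - 1` whenever `1 ∈ X`. Applied to the pairs `(A, B)` and `(B, A)` this
forces `dim B = n` and `κ₂(A) = n - 1`. In this critical situation every fragment `V` of `A` either
satisfies `dim (VA) + n = dim L` (the inequality `≤` holds because the trace-form orthogonal of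
`VA` is again a fragment) or grows, by a translate of `B`, into a fragment of dimension
`dim V + n - 1`. Starting from `V = B` this gives `dim L ≡ (2n - 1) + n ≡ 2 (mod n - 1)`.
-/

open scoped Pointwise

theorem Submodule.exists_le_finrank_eq {K V : Type*} [DivisionRing K] [AddCommGroup V]
    [Module K V] {X : Submodule K V} {m : ℕ} (hm : m ≤ finrank K ↥X) :
    ∃ Y ≤ X, finrank K ↥Y = m := by
  obtain ⟨f, hf⟩ := exists_linearIndependent_of_le_finrank hm
  refine ⟨span K (Set.range (X.subtype ∘ f)),
    Submodule.span_le.2 (Set.range_subset_iff.2 fun i ↦ (f i).2), ?_⟩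
  rw [finrank_span_eq_card (hf.map' X.subtype X.ker_subtype), Fintype.card_fin]

theorem top_mul_of_ne_bot {S : Submodule F L} (hS : S ≠ ⊥) :
    (⊤ : Submodule F L) * S = ⊤ := by
  obtain ⟨s, hsS, hs⟩ := (Submodule.ne_bot_iff S).1 hS
  refine eq_top_iff.2 fun x _ ↦ ?_
  simpa [hs] using Submodule.mul_mem_mul (Submodule.mem_top (x := x * s⁻¹)) hsS

theorem finrank_pointwise_smul {c : L} (hc : c ≠ 0) (X : Submodule F L) :
    finrank F ↥(c • X) = finrank F ↥X :=
  (Submodule.equivMapOfInjective _ (smul_right_injective L hc) X).finrank_eq.symm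

theorem deltaS_pointwise_smul {c : L} (hc : c ≠ 0) (S X : Submodule F L) :
    deltaS S (c • X) = deltaS S X := by
  rw [deltaS, deltaS, smul_mul_assoc, finrank_pointwise_smul hc, finrank_pointwise_smul hc]

theorem deltaS_add_finrank_comm (S T : Submodule F L) :
    deltaS S T + finrank F ↥T = deltaS T S + finrank F ↥S := by
  rw [deltaS, deltaS, Submodule.mul_comm]
  ring

theorem deltaS_span_singleton {s : L} (hs : s ≠ 0) (X : Submodule F L) :
    deltaS (span F {s}) X = 0 := by
  rw [deltaS, Submodule.mul_comm, Submodule.span_singleton_mul, finrank_pointwise_smul hs, sub_self]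

section Fragments

variable {k : ℕ} {S X Y A : Submodule F L}

theorem IsFragment.deltaS_eq (hX : IsFragment k S X) (hY : IsFragment k S Y) :
    deltaS S X = deltaS S Y :=
  le_antisymm (hX.2 Y hY.1) (hY.2 X hX.1)

theorem IsFragment.of_deltaS_le (hX : IsFragment k S X) (hY : InXk k S Y)
    (h : deltaS S Y ≤ deltaS S X) : IsFragment k S Y :=
  ⟨hY, fun Z hZ ↦ h.trans (hX.2 Z hZ)⟩

variable [FiniteDimensional F L]

theorem inXk_iff :
    InXk k S X ↔ k ≤ finrank F ↥X ∧ finrank F ↥(X * S) + k ≤ finrank F L := by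
  rw [InXk, ← finrank_eq_rank, Nat.cast_le]
  exact ⟨fun h ↦ h.2, fun h ↦ ⟨inferInstance, h⟩⟩

theorem InXk.mono (hY : InXk k S Y) (hXY : X ≤ Y) (hX : k ≤ finrank F ↥X) : InXk k S X := by
  rw [inXk_iff] at hY ⊢
  exact ⟨hX, le_trans (by gcongr; exact Submodule.finrank_mono (mul_le_mul_left hXY S)) hY.2⟩

theorem InXk.pointwise_smul (hX : InXk k S X) {c : L} (hc : c ≠ 0) : InXk k S (c • X) := by
  rwa [inXk_iff, smul_mul_assoc, finrank_pointwise_smul hc, finrank_pointwise_smul hc, ← inXk_iff]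

theorem InXk.ne_bot (hX : InXk k S X) (hk : 0 < k) : X ≠ ⊥ := by
  rintro rfl
  have := (inXk_iff.1 hX).1
  rw [finrank_bot] at this
  omega

theorem InXk.ne_top (hX : InXk k S X) (hS : S ≠ ⊥) (hk : 0 < k) : X ≠ ⊤ := by
  rintro rfl
  have := (inXk_iff.1 hX).2
  rw [top_mul_of_ne_bot hS, finrank_top] at this
  omega

theorem IsFragment.pointwise_smul (hX : IsFragment k S X) {c : L} (hc : c ≠ 0) :
    IsFragment k S (c • X) :=
  hX.of_deltaS_le (hX.1.pointwise_smul hc) (deltaS_pointwise_smul hc S X).le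

theorem IsAtomk.pointwise_smul (hA : IsAtomk k S A) {c : L} (hc : c ≠ 0) :
    IsAtomk k S (c • A) :=
  ⟨hA.1.pointwise_smul hc, fun B hB ↦ (finrank_pointwise_smul hc A).trans_le (hA.2 B hB)⟩

theorem IsAtomk.exists_one_mem (hA : IsAtomk k S A) (hk : 0 < k) :
    ∃ A', IsAtomk k S A' ∧ (1 : L) ∈ A' ∧ finrank F ↥A' = finrank F ↥A := by
  obtain ⟨c, hcA, hc⟩ := (Submodule.ne_bot_iff A).1 (hA.1.1.ne_bot hk)
  refine ⟨c⁻¹ • A, hA.pointwise_smul (inv_ne_zero hc), ?_,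
    finrank_pointwise_smul (inv_ne_zero hc) A⟩
  simpa [inv_mul_cancel₀ hc] using Submodule.smul_mem_pointwise_smul c c⁻¹ A hcA

theorem exists_isAtomk (h : ∃ X, InXk k S X) : ∃ A, IsAtomk k S A := by
  classical
  have hbdd : ∀ X, -(finrank F L : ℤ) ≤ deltaS S X := fun X ↦ by
    have := Submodule.finrank_le X
    unfold deltaS
    omega
  obtain ⟨_, ⟨X, hX, rfl⟩, hδ⟩ :=
    Int.exists_least_of_bdd (P := fun z ↦ ∃ X, InXk k S X ∧ deltaS S X = z)
      ⟨_, fun _ ⟨X, _, hz⟩ ↦ hz ▸ hbdd X⟩ (h.elim fun X hX ↦ ⟨_, X, hX, rfl⟩)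
  have hfrag : ∃ m, ∃ A, IsFragment k S A ∧ finrank F ↥A = m :=
    ⟨_, X, ⟨hX, fun Y hY ↦ hδ _ ⟨Y, hY, rfl⟩⟩, rfl⟩
  obtain ⟨A, hA, hAm⟩ := Nat.find_spec hfrag
  exact ⟨A, hA, fun B hB ↦ hAm ▸ Nat.find_min' hfrag ⟨B, hB, rfl⟩⟩

theorem IsAtomk.finrank_eq_of_finrank_eq_one (hS : finrank F ↥S = 1) (hA : IsAtomk k S A) :
    finrank F ↥A = k := by
  obtain ⟨s, hsS, hs⟩ := (Submodule.ne_bot_iff S).1 (Submodule.finrank_eq_zero.not.1 (by omega))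
  obtain rfl : span F {s} = S := Submodule.eq_of_le_of_finrank_le
    (Submodule.span_le.2 (Set.singleton_subset_iff.2 hsS)) (by rw [finrank_span_singleton hs, hS])
  have hkA := (inXk_iff.1 hA.1.1).1
  obtain ⟨Y, hYA, hY⟩ := Submodule.exists_le_finrank_eq hkA
  have hYfrag : IsFragment k (span F {s}) Y := hA.1.of_deltaS_le (hA.1.1.mono hYA hY.ge)
    (by rw [deltaS_span_singleton hs, deltaS_span_singleton hs])
  exact le_antisymm (hY ▸ hA.2 Y hYfrag) hkA

theorem deltaS_inf_add_deltaS_sup_le (S X Y : Submodule F L) :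
    deltaS S (X ⊓ Y) + deltaS S (X ⊔ Y) ≤ deltaS S X + deltaS S Y := by
  have hinf : finrank F ↥((X ⊓ Y) * S) ≤ finrank F ↥(X * S ⊓ Y * S) :=
    Submodule.finrank_mono <|
      le_inf (mul_le_mul_left inf_le_left S) (mul_le_mul_left inf_le_right S)
  have hmul := Submodule.finrank_sup_add_finrank_inf_eq (X * S) (Y * S)
  have h := Submodule.finrank_sup_add_finrank_inf_eq X Y
  rw [← Submodule.sup_mul] at hmul
  unfold deltaS
  omega

end Fragments

section NoIntermediateFields

variable [FiniteDimensional F L]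

theorem exists_mem_not_mem_one {X : Submodule F L} (hX : 2 ≤ finrank F ↥X) :
    ∃ x ∈ X, x ∉ (1 : Submodule F L) := by
  by_contra! h
  have := Submodule.finrank_mono (show X ≤ 1 from h)
  rw [Submodule.one_eq_span, finrank_span_singleton one_ne_zero] at this
  omega

theorem eq_top_of_mul_le_self (hL : ∀ K : IntermediateField F L, K = ⊥ ∨ K = ⊤)
    {X Y : Submodule F L} (hX : X ≠ ⊥) (hY : ¬ Y ≤ 1) (h : X * Y ≤ X) : X = ⊤ := by
  obtain ⟨y, hyY, hy⟩ := Set.not_subset.1 hY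
  have hadjoin : Algebra.adjoin F {y} = ⊤ := by
    have hbot : IntermediateField.adjoin F {y} ≠ ⊥ := by
      rw [Ne, IntermediateField.adjoin_simple_eq_bot_iff, IntermediateField.mem_bot]
      simpa [Submodule.mem_one] using hy
    rw [← IntermediateField.adjoin_simple_toSubalgebra_of_isAlgebraic
      (Algebra.IsAlgebraic.isAlgebraic y), (hL _).resolve_left hbot,
      IntermediateField.top_toSubalgebra]
  have hstable : ∀ z ∈ Algebra.adjoin F {y}, ∀ x ∈ X, z * x ∈ X := by
    intro z hz
    induction hz using Algebra.adjoin_induction with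
    | mem u hu =>
      rw [Set.mem_singleton_iff.1 hu]
      exact fun x hx ↦ mul_comm x y ▸ h (Submodule.mul_mem_mul hx hyY)
    | algebraMap r => exact fun x hx ↦ by simpa [Algebra.smul_def] using X.smul_mem r hx
    | add u v _ _ hu hv => exact fun x hx ↦ add_mul u v x ▸ X.add_mem (hu x hx) (hv x hx)
    | mul u v _ _ hu hv => exact fun x hx ↦ (mul_assoc u v x).symm ▸ hu _ (hv x hx)
  obtain ⟨x, hxX, hx⟩ := (Submodule.ne_bot_iff X).1 hX
  refine eq_top_iff.2 fun w _ ↦ ?_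
  simpa [hx] using hstable (w * x⁻¹) (hadjoin ▸ Algebra.mem_top) x hxX

end NoIntermediateFields

section TraceDual

open Algebra (traceForm)

theorem orthogonal_traceForm_mul_mul_le (X S : Submodule F L) :
    (traceForm F L).orthogonal (X * S) * S ≤ (traceForm F L).orthogonal X := by
  refine Submodule.mul_le.2 fun u hu s hs ↦ ?_
  refine LinearMap.BilinForm.mem_orthogonal_iff.2 fun v hv ↦ ?_
  have := LinearMap.BilinForm.mem_orthogonal_iff.1 hu (v * s) (Submodule.mul_mem_mul hv hs)
  simpa [Algebra.traceForm_apply, mul_left_comm, mul_assoc, mul_comm] using this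

theorem finrank_orthogonal_traceForm [FiniteDimensional F L] [Algebra.IsSeparable F L]
    (W : Submodule F L) :
    finrank F ↥((traceForm F L).orthogonal W) = finrank F L - finrank F ↥W :=
  LinearMap.BilinForm.finrank_orthogonal (traceForm_nondegenerate F L) W

end TraceDual

section Atoms

variable [FiniteDimensional F L] [Algebra.IsSeparable F L] {k : ℕ} {S V B : Submodule F L}

open Algebra (traceForm)

theorem IsFragment.orthogonal_traceForm (hV : IsFragment k S V) :
    IsFragment k S ((traceForm F L).orthogonal (V * S)) := by
  have hYS := Submodule.finrank_mono (orthogonal_traceForm_mul_mul_le V S)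
  rw [finrank_orthogonal_traceForm] at hYS
  have hY := finrank_orthogonal_traceForm (V * S)
  have hV' := inXk_iff.1 hV.1
  have := Submodule.finrank_le V
  refine hV.of_deltaS_le (inXk_iff.2 ⟨by omega, by omega⟩) ?_
  unfold deltaS
  omega

theorem IsAtomk.finrank_mul_add_finrank_le (hB : IsAtomk k S B) (hV : IsFragment k S V) :
    finrank F ↥(V * S) + finrank F ↥B ≤ finrank F L := by
  have := hB.2 _ hV.orthogonal_traceForm
  rw [finrank_orthogonal_traceForm] at this
  have := (inXk_iff.1 hV.1).2
  omega

theorem IsAtomk.le_of_isFragment (hB : IsAtomk k S B) (hV : IsFragment k S V)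
    (hk : k ≤ finrank F ↥(V ⊓ B)) : B ≤ V := by
  have hZ : InXk k S (V ⊓ B) := hB.1.1.mono inf_le_right hk
  have hsub := deltaS_inf_add_deltaS_sup_le S V B
  have hδZ := hV.2 _ hZ
  have hδB := hB.1.deltaS_eq hV
  have hW : InXk k S (V ⊔ B) := by
    have hdual := hB.finrank_mul_add_finrank_le hV
    have hdim := Submodule.finrank_sup_add_finrank_inf_eq V B
    have hkV := (inXk_iff.1 hV.1).1
    have hVW := Submodule.finrank_mono (le_sup_left : V ≤ V ⊔ B)
    unfold deltaS at hsub hδZ hδB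
    exact inXk_iff.2 ⟨by omega, by omega⟩
  have hZfrag : IsFragment k S (V ⊓ B) := hV.of_deltaS_le hZ (by linarith [hV.2 _ hW])
  exact Submodule.eq_of_le_of_finrank_le inf_le_right (hB.2 _ hZfrag) ▸ inf_le_left

theorem IsAtomk.finrank_inf_smul_lt (hL : ∀ K : IntermediateField F L, K = ⊥ ∨ K = ⊤)
    (hS : S ≠ ⊥) (hk : 0 < k) (hB : IsAtomk k S B) {x : L} (hx : x ∉ (1 : Submodule F L)) :
    finrank F ↥(B ⊓ x • B) < k := by
  by_contra! h
  have hx0 : x ≠ 0 := by rintro rfl; exact hx (zero_mem _)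
  have hxB : x • B ≤ B := (hB.pointwise_smul hx0).le_of_isFragment hB.1 h
  refine hB.1.1.ne_top hS hk (eq_top_of_mul_le_self hL (hB.1.1.ne_bot hk) (Y := span F {x})
    (fun h1 ↦ hx (h1 (Submodule.mem_span_singleton_self x))) ?_)
  rwa [Submodule.mul_comm, Submodule.span_singleton_mul]

theorem IsAtomk.two_mul_finrank_lt_finrank_mul_add
    (hL : ∀ K : IntermediateField F L, K = ⊥ ∨ K = ⊤) (hS : S ≠ ⊥) (hk : 0 < k)
    (hB : IsAtomk k S B) {X : Submodule F L} (hX1 : (1 : L) ∈ X)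
    (hX : 2 ≤ finrank F ↥X) : 2 * finrank F ↥B < finrank F ↥(X * B) + k := by
  obtain ⟨x, hxX, hx⟩ := exists_mem_not_mem_one hX
  have hx0 : x ≠ 0 := by rintro rfl; exact hx (zero_mem _)
  have hle : B ⊔ x • B ≤ X * B := by
    refine sup_le ?_ ?_
    · simpa using mul_le_mul_left (Submodule.one_le.2 hX1) B
    · simpa [Submodule.span_singleton_mul] using
        mul_le_mul_left (Submodule.span_le.2 (Set.singleton_subset_iff.2 hxX)) B
  have hsup := Submodule.finrank_sup_add_finrank_inf_eq B (x • B)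
  rw [finrank_pointwise_smul hx0] at hsup
  have := Submodule.finrank_mono hle
  have := hB.finrank_inf_smul_lt hL hS hk hx
  omega

end Atoms



section Critical

variable [FiniteDimensional F L] [Algebra.IsSeparable F L] {T B V : Submodule F L}

theorem IsFragment.finrank_mul_add_finrank_eq_or_exists
    (hL : ∀ K : IntermediateField F L, K = ⊥ ∨ K = ⊤) (hT : T ≠ ⊥) (hB : IsAtomk 2 T B)
    (h1B : (1 : L) ∈ B)
    (hcrit : deltaS T B + 1 = finrank F ↥T) (hV : IsFragment 2 T V) :
    finrank F ↥(V * T) + finrank F ↥B = finrank F L ∨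
      ∃ V', IsFragment 2 T V' ∧ finrank F ↥V' + 1 = finrank F ↥V + finrank F ↥B := by
  obtain ⟨c, hcV, hcB⟩ : ∃ c ∈ V, ¬ c • B ≤ V := by
    by_contra! h
    obtain ⟨b, hbB, hb⟩ := exists_mem_not_mem_one (inXk_iff.1 hB.1.1).1
    refine hV.1.ne_top hT two_pos (eq_top_of_mul_le_self hL (hV.1.ne_bot two_pos)
      (fun hB1 ↦ hb (hB1 hbB)) ?_)
    exact Submodule.mul_le.2 fun v hv b hb ↦ h v hv (Submodule.smul_mem_pointwise_smul b v B hb)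
  have hc0 : c ≠ 0 := by rintro rfl; exact hcB (by simp)
  have hZ : V ⊓ c • B = span F {c} := by
    have hcB' : c ∈ c • B := by simpa using Submodule.smul_mem_pointwise_smul 1 c B h1B
    have hcZ : span F {c} ≤ V ⊓ c • B :=
      (Submodule.span_singleton_le_iff_mem _ _).2 ⟨hcV, hcB'⟩
    refine (Submodule.eq_of_le_of_finrank_le hcZ ?_).symm
    rw [finrank_span_singleton hc0]
    by_contra! h
    exact hcB ((hB.pointwise_smul hc0).le_of_isFragment hV (by omega))
  have hδZ : deltaS T (V ⊓ c • B) = deltaS T B := by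
    rw [hZ, deltaS, Submodule.span_singleton_mul, finrank_pointwise_smul hc0,
      finrank_span_singleton hc0]
    omega
  have hsub := deltaS_inf_add_deltaS_sup_le T V (c • B)
  rw [hδZ, deltaS_pointwise_smul hc0, hB.1.deltaS_eq hV] at hsub
  have hdim := Submodule.finrank_sup_add_finrank_inf_eq V (c • B)
  rw [hZ, finrank_span_singleton hc0, finrank_pointwise_smul hc0] at hdim
  by_cases hW : InXk 2 T (V ⊔ c • B)
  · exact Or.inr ⟨_, hV.of_deltaS_le hW (by linarith), by omega⟩
  · left
    have hdual := hB.finrank_mul_add_finrank_le hV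
    have hVW := Submodule.finrank_mono (le_sup_left : V ≤ V ⊔ c • B)
    have hV2 := (inXk_iff.1 hV.1).1
    rw [inXk_iff] at hW
    unfold deltaS at hsub
    omega

theorem IsFragment.finrank_modEq (hL : ∀ K : IntermediateField F L, K = ⊥ ∨ K = ⊤)
    (hT : T ≠ ⊥) (hB : IsAtomk 2 T B) (h1B : (1 : L) ∈ B)
    (hcrit : deltaS T B + 1 = finrank F ↥T) (hV : IsFragment 2 T V) :
    finrank F L ≡ finrank F ↥(V * T) + finrank F ↥B [MOD finrank F ↥B - 1] := by
  induction hd : finrank F L - finrank F ↥V using Nat.strong_induction_on generalizing V with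
  | _ d ih =>
  rcases hV.finrank_mul_add_finrank_eq_or_exists hL hT hB h1B hcrit with h | ⟨V', hV', hdim⟩
  · rw [h]
  · have hq := (inXk_iff.1 hB.1.1).1
    have hV'L := Submodule.finrank_le V'
    have hδ := hV'.deltaS_eq hV
    unfold deltaS at hδ
    have hstep : finrank F ↥(V' * T) + finrank F ↥B =
        finrank F ↥(V * T) + finrank F ↥B + (finrank F ↥B - 1) := by omega
    exact (hstep ▸ ih _ (by omega) hV' rfl).trans Nat.add_modEq_right

end Critical

theorem stmt10_general [FiniteDimensional F L] [Algebra.IsSeparable F L]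
    (hL : ∀ K : IntermediateField F L, K = ⊥ ∨ K = ⊤)
    (S : Submodule F L)
    (hκmin : ∀ X : Submodule F L, InXk 2 S X → (finrank F ↥S : ℤ) - 1 ≤ deltaS S X)
    (hκex : ∃ X : Submodule F L, InXk 2 S X ∧ deltaS S X = (finrank F ↥S : ℤ) - 1)
    (A : Submodule F L) (hA : IsAtomk 2 S A)
    (n : ℕ) (hn : finrank F ↥A = n) (h2 : 2 < n) :
    finrank F L % (n - 1) = 2 % (n - 1) := by
  have hδA : deltaS S A = finrank F ↥S - 1 := by
    obtain ⟨X, hX, hδX⟩ := hκex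
    exact le_antisymm (hδX ▸ hA.1.2 X hX) (hκmin A hA.1.1)
  have hS : S ≠ ⊥ := by
    rintro rfl
    rw [deltaS, Submodule.mul_bot, finrank_bot, hn] at hδA
    omega
  have hS2 : 2 ≤ finrank F ↥S := by
    have := Submodule.finrank_eq_zero.not.2 hS
    have := mt hA.finrank_eq_of_finrank_eq_one
    omega
  obtain ⟨A', hA', h1A', hA'n⟩ := hA.exists_one_mem two_pos
  have hSA' : InXk 2 A' S := by
    rw [inXk_iff, Submodule.mul_comm]
    exact ⟨hS2, (inXk_iff.1 hA'.1.1).2⟩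
  obtain ⟨B, hB, h1B, -⟩ := (exists_isAtomk ⟨S, hSA'⟩).choose_spec.exists_one_mem two_pos
  have hA'0 : A' ≠ ⊥ := hA'.1.1.ne_bot two_pos
  have hδB : deltaS A' B ≤ n - 1 := by
    have := deltaS_add_finrank_comm S A'
    have := hA'.1.deltaS_eq hA.1
    have := hB.1.2 S hSA'
    omega
  have hBn : finrank F ↥B = n ∧ finrank F ↥(B * A') = 2 * n - 1 := by
    have h₁ := hA'.two_mul_finrank_lt_finrank_mul_add hL hS two_pos h1B (inXk_iff.1 hB.1.1).1
    have h₂ := hB.two_mul_finrank_lt_finrank_mul_add hL hA'0 two_pos h1A' (by omega)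
    rw [Submodule.mul_comm] at h₂
    unfold deltaS at hδB
    omega
  have hmod := hB.1.finrank_modEq hL hA'0 hB h1B (by unfold deltaS; omega)
  rw [hBn.1, hBn.2, show 2 * n - 1 + n = 2 + (n - 1) * 3 by omega] at hmod
  exact hmod.trans (Nat.add_mul_mod_self_left 2 (n - 1) 3)

theorem stmt10 [FiniteDimensional F L] [Algebra.IsSeparable F L]
    (hL : ∀ K : IntermediateField F L, K = ⊥ ∨ K = ⊤)
    (S : Submodule F L) (hS : FiniteDimensional F ↥S)
    (hκmin : ∀ X : Submodule F L, InXk 2 S X → (finrank F ↥S : ℤ) - 1 ≤ deltaS S X)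
    (hκex : ∃ X : Submodule F L, InXk 2 S X ∧ deltaS S X = (finrank F ↥S : ℤ) - 1)
    (A : Submodule F L) (hA : IsAtomk 2 S A)
    (n : ℕ) (hn : finrank F ↥A = n) (h2 : 2 < n) :
    finrank F L % (n - 1) = 2 % (n - 1) :=
  stmt10_general hL S hκmin hκex A hA n hn h2
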